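/- arXiv:math/0510259 — 3 statements merged into one kernel-verified Lean document; each statement's English description precedes it below -/
import Mathlib

section
/- Let X be a nonempty compact connected Hausdorff topological space, and let C : ℕ → Set X be a countable family of pairwise disjoint closed subsets of X whose union is all of X. Then some member of the family is all of X: there exists n with C n = X (equivalently, at most one of the sets C n is nonempty). -/
open Set

/-- In a compact Hausdorff space, if the connected component of a point is contained in an
open set, there is a clopen set between them. -/
private theorem sierp_exists_clopen {Y : Type*} [TopologicalSpace Y] [CompactSpace Y]
    [T2Space Y] {y : Y} {W : Set Y} (hW : IsOpen W) (h : connectedComponent y ⊆ W) :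
    ∃ A : Set Y, IsClopen A ∧ y ∈ A ∧ A ⊆ W := by
  have H1 := hW.isClosed_compl.isCompact.inter_iInter_nonempty
    (fun s : { s : Set Y // IsClopen s ∧ y ∈ s } => (s : Set Y)) fun s => s.2.1.1
  rw [← not_disjoint_iff_nonempty_inter, imp_not_comm, not_forall] at H1
  obtain ⟨si, H2⟩ := H1 (disjoint_compl_left_iff_subset.2 <| by
    rw [← connectedComponent_eq_iInter_isClopen]; exact h)
  refine ⟨⋂ U ∈ si, (U : Set Y), isClopen_biInter_finset fun s _ => s.2.1,
    mem_iInter₂.2 fun s _ => s.2.2, ?_⟩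
  rwa [← disjoint_compl_left_iff_subset, disjoint_iff_inter_eq_empty,
    ← not_nonempty_iff_eq_empty]

/-- Boundary bumping: in a continuum, the connected component (inside a proper nonempty
closed set `F`) of a point of `F` meets the frontier of `F`. -/
private theorem sierp_bump {X : Type*} [TopologicalSpace X] [CompactSpace X] [T2Space X]
    [ConnectedSpace X] {F : Set X} (hF : IsClosed F) (hFne : F ≠ univ) {y : X}
    (hy : y ∈ F) : (connectedComponentIn F y ∩ frontier F).Nonempty := by
  by_contra hcon
  rw [not_nonempty_iff_eq_empty, ← disjoint_iff_inter_eq_empty] at hcon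
  have hsubF : connectedComponentIn F y ⊆ F := connectedComponentIn_subset F y
  have hsubint : connectedComponentIn F y ⊆ interior F := by
    intro z hz
    have hzF : z ∈ F := hsubF hz
    have : z ∉ frontier F := fun hzf => (hcon.le_bot ⟨hz, hzf⟩ : z ∈ (∅ : Set X))
    rw [hF.frontier_eq] at this
    simp only [mem_diff, not_and, not_not] at this
    exact this hzF
  haveI : CompactSpace F := isCompact_iff_compactSpace.mp hF.isCompact
  have himg : connectedComponentIn F y = (↑) '' connectedComponent (⟨y, hy⟩ : F) :=
    connectedComponentIn_eq_image hy
  have hcomp : connectedComponent (⟨y, hy⟩ : F) ⊆ (↑) ⁻¹' (interior F) := by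
    intro a ha
    exact hsubint (himg ▸ mem_image_of_mem _ ha)
  obtain ⟨A, hA, hyA, hAsub⟩ := sierp_exists_clopen
    (isOpen_interior.preimage continuous_subtype_val) hcomp
  set B : Set X := (↑) '' A with hB
  have hBsub : B ⊆ interior F := by
    rintro _ ⟨a, ha, rfl⟩; exact hAsub ha
  have hBclosed : IsClosed B := (hA.1.isCompact.image continuous_subtype_val).isClosed
  have hBopen : IsOpen B := by
    obtain ⟨V, hV, hAV⟩ := isOpen_induced_iff.mp hA.2
    have : B = interior F ∩ V := by
      apply Subset.antisymm
      · rintro _ ⟨a, ha, rfl⟩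
        exact ⟨hAsub ha, by rw [← hAV] at ha; exact ha⟩
      · rintro z ⟨hz1, hz2⟩
        exact ⟨⟨z, interior_subset hz1⟩, by rw [← hAV]; exact hz2, rfl⟩
    rw [this]; exact isOpen_interior.inter hV
  have : B = ∅ ∨ B = univ := isClopen_iff.mp ⟨hBclosed, hBopen⟩
  rcases this with h | h
  · exact absurd h (Nonempty.ne_empty ⟨y, ⟨⟨y, hy⟩, hyA, rfl⟩⟩)
  · exact hFne (Subset.antisymm (subset_univ F)
      (h ▸ hBsub |>.trans interior_subset |> fun hh => by
        rw [← h]; exact fun z _ => hh (by trivial)))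

/-- Core step inside a continuum `Y`: given a disjoint countable closed cover, none of whose
members is everything, for each `i` there is a subcontinuum avoiding `D i` and not contained
in any member. -/
private theorem sierp_step_core {Y : Type*} [TopologicalSpace Y] [CompactSpace Y] [T2Space Y]
    [ConnectedSpace Y] [Nonempty Y] (D : ℕ → Set Y) (hclosed : ∀ n, IsClosed (D n))
    (hdisj : ∀ m n, m ≠ n → D m ∩ D n = ∅) (hcover : ⋃ n, D n = univ)
    (hproper : ∀ m, D m ≠ univ) (i : ℕ) :
    ∃ K : Set Y, IsCompact K ∧ IsConnected K ∧ K ∩ D i = ∅ ∧ ∀ m, ¬K ⊆ D m := by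
  by_cases hDi : D i = ∅
  · refine ⟨univ, isCompact_univ, isConnected_univ, by simp [hDi], fun m hm => ?_⟩
    exact hproper m (Subset.antisymm (subset_univ _) (univ_subset_iff.mp hm ▸ hm))
  · have hDine : (D i).Nonempty := nonempty_iff_ne_empty.mpr hDi
    obtain ⟨y, hyni⟩ : ∃ y, y ∉ D i := by
      by_contra h; push_neg at h
      exact hproper i (eq_univ_of_forall h)
    obtain ⟨j, hyj⟩ : ∃ j, y ∈ D j := by
      have : y ∈ ⋃ n, D n := hcover ▸ mem_univ y
      exact mem_iUnion.mp this
    have hji : j ≠ i := fun h => hyni (h ▸ hyj)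
    have hdisjij : Disjoint (D i) (D j) :=
      disjoint_iff_inter_eq_empty.mpr (hdisj i j (Ne.symm hji))
    obtain ⟨u, v, hu, hv, hiu, hjv, huv⟩ := normal_separation (hclosed i) (hclosed j) hdisjij
    have hyF : y ∈ uᶜ := fun hyu => huv.le_bot ⟨hyu, hjv hyj⟩
    have hFne : uᶜ ≠ univ := by
      intro h
      obtain ⟨w, hw⟩ := hDine
      have : w ∈ uᶜ := h ▸ mem_univ w
      exact this (hiu hw)
    have hbump := sierp_bump hu.isClosed_compl hFne hyF
    obtain ⟨z, hzK, hzfr⟩ := hbump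
    set K := connectedComponentIn uᶜ y with hK
    have hKsub : K ⊆ uᶜ := connectedComponentIn_subset _ _
    have hyK : y ∈ K := mem_connectedComponentIn hyF
    have hKconn : IsConnected K := ⟨⟨y, hyK⟩, isPreconnected_connectedComponentIn⟩
    have hKcompact : IsCompact K := by
      haveI : CompactSpace (uᶜ : Set Y) := isCompact_iff_compactSpace.mp
        hu.isClosed_compl.isCompact
      rw [hK, connectedComponentIn_eq_image hyF]
      exact isClosed_connectedComponent.isCompact.image continuous_subtype_val
    have hzclu : z ∈ closure u := by
      have : frontier (uᶜ : Set Y) = frontier u := frontier_compl u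
      rw [this] at hzfr
      exact hzfr.1
    have hzni : z ∉ D i := fun h => hKsub hzK (hiu h)
    have hznj : z ∉ D j := by
      intro h
      exact (huv.closure_left hv).le_bot ⟨hzclu, hjv h⟩
    obtain ⟨k, hzk⟩ : ∃ k, z ∈ D k := mem_iUnion.mp (hcover ▸ mem_univ z)
    have hki : k ≠ i := fun h => hzni (h ▸ hzk)
    have hkj : k ≠ j := fun h => hznj (h ▸ hzk)
    refine ⟨K, hKcompact, hKconn, ?_, ?_⟩
    · apply eq_empty_of_forall_notMem
      rintro w ⟨hw1, hw2⟩
      exact hKsub hw1 (hiu hw2)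
    · intro m hm
      have hmj : m = j := by
        by_contra h
        have h2 : y ∈ D m ∩ D j := ⟨hm hyK, hyj⟩
        rw [hdisj m j h] at h2
        exact h2
      have hmk : m = k := by
        by_contra h
        have h2 : z ∈ D m ∩ D k := ⟨hm hzK, hzk⟩
        rw [hdisj m k h] at h2
        exact h2
      exact hkj (hmk ▸ hmj ▸ rfl)

/-- Step in the ambient space: shrink a continuum avoiding one more set of the partition. -/
private theorem sierp_step {X : Type*} [TopologicalSpace X] [CompactSpace X] [T2Space X]
    (C : ℕ → Set X) (hclosed : ∀ n, IsClosed (C n))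
    (hdisj : ∀ m n, m ≠ n → C m ∩ C n = ∅) (hcover : ⋃ n, C n = univ)
    (K : Set X) (hKc : IsCompact K) (hKconn : IsConnected K) (hKm : ∀ m, ¬K ⊆ C m) (i : ℕ) :
    ∃ K' : Set X, K' ⊆ K ∧ K' ∩ C i = ∅ ∧
      IsCompact K' ∧ IsConnected K' ∧ ∀ m, ¬K' ⊆ C m := by
  haveI : CompactSpace K := isCompact_iff_compactSpace.mp hKc
  haveI : ConnectedSpace K := Subtype.connectedSpace hKconn
  haveI : Nonempty K := hKconn.nonempty.to_subtype
  set D : ℕ → Set K := fun n => (↑) ⁻¹' (C n) with hD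
  have hDclosed : ∀ n, IsClosed (D n) := fun n => (hclosed n).preimage continuous_subtype_val
  have hDdisj : ∀ m n, m ≠ n → D m ∩ D n = ∅ := by
    intro m n hmn
    apply eq_empty_of_forall_notMem
    rintro a ⟨h1, h2⟩
    have h3 : (a : X) ∈ C m ∩ C n := ⟨h1, h2⟩
    rw [hdisj m n hmn] at h3
    exact h3
  have hDcover : ⋃ n, D n = univ := by
    apply eq_univ_of_forall
    intro a
    have : (a : X) ∈ ⋃ n, C n := hcover ▸ mem_univ _
    obtain ⟨n, hn⟩ := mem_iUnion.mp this
    exact mem_iUnion.mpr ⟨n, hn⟩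
  have hDproper : ∀ m, D m ≠ univ := by
    intro m h
    apply hKm m
    intro x hx
    have : (⟨x, hx⟩ : K) ∈ D m := h ▸ mem_univ _
    exact this
  obtain ⟨K'', hc, hconn, hdisji, hmem⟩ := sierp_step_core D hDclosed hDdisj hDcover hDproper i
  refine ⟨(↑) '' K'', Subtype.coe_image_subset K K'', ?_,
    hc.image continuous_subtype_val, hconn.image _ continuous_subtype_val.continuousOn, ?_⟩
  · apply eq_empty_of_forall_notMem
    rintro x ⟨⟨a, ha, rfl⟩, hx2⟩
    have : a ∈ K'' ∩ D i := ⟨ha, hx2⟩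
    rw [hdisji] at this
    exact this
  · intro m hm
    apply hmem m
    intro a ha
    exact hm (mem_image_of_mem _ ha)

/-- Sierpinski's theorem: a nonempty compact connected Hausdorff space cannot be
partitioned into countably many pairwise disjoint closed sets unless one of them is the
whole space. -/
theorem sierpinski_continuum_partition (X : Type*) [TopologicalSpace X] [Nonempty X]
    [CompactSpace X] [ConnectedSpace X] [T2Space X]
    (C : ℕ → Set X) (hclosed : ∀ n, IsClosed (C n))
    (hdisj : ∀ m n, m ≠ n → C m ∩ C n = ∅)
    (hcover : ⋃ n, C n = Set.univ) :
    ∃ n, C n = Set.univ := by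
  by_contra hcon
  push_neg at hcon
  set Good : Set X → Prop := fun K => IsCompact K ∧ IsConnected K ∧ ∀ m, ¬K ⊆ C m with hGood
  have good0 : Good univ := by
    refine ⟨isCompact_univ, isConnected_univ, fun m hm => hcon m ?_⟩
    exact Subset.antisymm (subset_univ _) hm
  have step : ∀ K, Good K → ∀ i, ∃ K', K' ⊆ K ∧ K' ∩ C i = ∅ ∧ Good K' := by
    intro K hK i
    obtain ⟨K', h1, h2, h3, h4, h5⟩ := sierp_step C hclosed hdisj hcover K hK.1 hK.2.1 hK.2.2 i
    exact ⟨K', h1, h2, h3, h4, h5⟩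
  choose f hfsub hfdisj hfgood using step
  set seq : ℕ → {S : Set X // Good S} := fun n =>
    Nat.rec ⟨univ, good0⟩ (fun n p => ⟨f p.1 p.2 n, hfgood p.1 p.2 n⟩) n with hseq
  have hseqsucc : ∀ n, (seq (n + 1)).1 = f (seq n).1 (seq n).2 n := fun n => rfl
  have hmono : ∀ n, (seq (n + 1)).1 ⊆ (seq n).1 := by
    intro n; rw [hseqsucc]; exact hfsub _ _ n
  have hdisjn : ∀ n, (seq (n + 1)).1 ∩ C n = ∅ := by
    intro n; rw [hseqsucc]; exact hfdisj _ _ n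
  have hne : ∀ n, (seq n).1.Nonempty := fun n => (seq n).2.2.1.nonempty
  have hclosedn : ∀ n, IsClosed (seq n).1 := fun n => (seq n).2.1.isClosed
  have hinter : (⋂ n, (seq n).1).Nonempty :=
    IsCompact.nonempty_iInter_of_sequence_nonempty_isCompact_isClosed _ hmono hne
      (seq 0).2.1 hclosedn
  obtain ⟨x, hx⟩ := hinter
  obtain ⟨n, hn⟩ : ∃ n, x ∈ C n := mem_iUnion.mp (hcover ▸ mem_univ x)
  have : x ∈ (seq (n + 1)).1 ∩ C n := ⟨mem_iInter.mp hx (n + 1), hn⟩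
  rw [hdisjn n] at this
  exact this
end

section
/- Let X be a topological space and let C : ℕ → Set X be a countable family of pairwise disjoint closed subsets of X. Then every path in X whose image lies in the union ⋃ n, C n actually lies in a single member of the family: for every continuous map γ : [0,1] → X with range γ ⊆ ⋃ n, C n, there exists n with range γ ⊆ C n. -/
/-- In a segment `[x,y]` with `x ∉ C m`, `y ∈ C m`, the first point of `C m` is a
frontier point of `C m`. -/
lemma seg_frontier (C : ℕ → Set ℝ) (hclosed : ∀ n, IsClosed (C n))
    (m : ℕ) (x y : ℝ) (hxy : x < y) (hxm : x ∉ C m) (hy : y ∈ C m) :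
    ∃ s, s ∈ frontier (C m) ∧ x ≤ s ∧ s ≤ y := by
  set S := C m ∩ Set.Icc x y with hS
  have hne : S.Nonempty := ⟨y, hy, le_of_lt hxy, le_refl y⟩
  have hSc : IsClosed S := (hclosed m).inter isClosed_Icc
  have hbdd : BddBelow S := ⟨x, fun u hu => hu.2.1⟩
  have hsS : sInf S ∈ S := hSc.csInf_mem hne hbdd
  set s := sInf S with hs
  have hxs : x < s := lt_of_le_of_ne hsS.2.1 (fun h => hxm (by rw [h]; exact hsS.1))
  have hIco : Set.Ico x s ⊆ (C m)ᶜ := by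
    intro u hu hum
    exact absurd (csInf_le hbdd ⟨hum, hu.1, hu.2.le.trans hsS.2.2⟩) (not_le.mpr hu.2)
  have hscl : s ∈ closure ((C m)ᶜ) := by
    have : s ∈ closure (Set.Ico x s) := by
      rw [closure_Ico hxs.ne]; exact ⟨hxs.le, le_refl s⟩
    exact closure_mono hIco this
  refine ⟨s, ?_, hsS.2.1, hsS.2.2⟩
  rw [frontier_eq_closure_inter_closure]
  exact ⟨subset_closure hsS.1, hscl⟩

/-- Sierpinski's theorem for ℝ: the real line is not the union of two or more disjoint
nonempty closed sets from a countable family. -/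
lemma real_sierpinski (C : ℕ → Set ℝ) (hclosed : ∀ n, IsClosed (C n))
    (hdisj : ∀ m n, m ≠ n → C m ∩ C n = ∅) (hcov : ⋃ n, C n = Set.univ) :
    ∃ n, C n = Set.univ := by
  classical
  set B : Set ℝ := (⋃ n, interior (C n))ᶜ with hBdef
  have hBclosed : IsClosed B := isClosed_compl_iff.mpr (isOpen_iUnion fun n => isOpen_interior)
  by_cases hB : B = ∅
  · -- the interiors cover ℝ; a clopen argument finishes
    have hcov' : (⋃ n, interior (C n)) = Set.univ := by
      have h2 := congrArg compl hB
      rw [hBdef, compl_compl, Set.compl_empty] at h2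
      exact h2
    obtain ⟨n, hn⟩ : ∃ n, (0:ℝ) ∈ interior (C n) := by
      have : (0:ℝ) ∈ ⋃ n, interior (C n) := hcov' ▸ Set.mem_univ 0
      exact Set.mem_iUnion.mp this
    have hclopen : IsClopen (interior (C n)) := by
      refine ⟨?_, isOpen_interior⟩
      rw [← closure_eq_iff_isClosed]
      apply subset_antisymm ?_ subset_closure
      intro z hz
      have hzc : z ∈ C n := (hclosed n).closure_subset ((closure_mono interior_subset) hz)
      have : z ∈ ⋃ k, interior (C k) := hcov' ▸ Set.mem_univ z
      obtain ⟨k, hk⟩ := Set.mem_iUnion.mp this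
      rcases eq_or_ne k n with rfl | hkn
      · exact hk
      · exact absurd (Set.mem_inter (interior_subset hk) hzc) (by rw [hdisj k n hkn]; exact id)
    have := hclopen.eq_univ ⟨0, hn⟩
    exact ⟨n, subset_antisymm (Set.subset_univ _) (this ▸ interior_subset)⟩
  · -- B nonempty: Baire category contradiction
    exfalso
    have hBne : B.Nonempty := Set.nonempty_iff_ne_empty.mpr hB
    haveI : Nonempty B := hBne.to_subtype
    haveI : CompleteSpace B := hBclosed.completeSpace_coe
    have hcovB : (⋃ n, (Subtype.val ⁻¹' frontier (C n) : Set B)) = Set.univ := by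
      ext ⟨u, hu⟩
      simp only [Set.mem_iUnion, Set.mem_preimage, Set.mem_univ, iff_true]
      obtain ⟨n, hn⟩ : ∃ n, u ∈ C n := Set.mem_iUnion.mp (hcov ▸ Set.mem_univ u)
      refine ⟨n, subset_closure hn, ?_⟩
      intro hint
      exact hu (Set.mem_iUnion.mpr ⟨n, hint⟩)
    obtain ⟨n, x, hx⟩ := nonempty_interior_of_iUnion_of_closed
      (fun n => (isClosed_frontier.preimage continuous_subtype_val)) hcovB
    obtain ⟨ε, hε, hball⟩ := Metric.mem_nhds_iff.mp (mem_interior_iff_mem_nhds.mp hx)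
    have hxfr : (x : ℝ) ∈ frontier (C n) := hball (Metric.mem_ball_self hε)
    have hxC : (x : ℝ) ∈ C n := (hclosed n).frontier_subset hxfr
    -- find y near x outside C n
    have hxcl : (x : ℝ) ∈ closure ((C n)ᶜ) := by
      rw [frontier_eq_closure_inter_closure] at hxfr; exact hxfr.2
    obtain ⟨y, hyc, hyd⟩ := Metric.mem_closure_iff.mp hxcl ε hε
    obtain ⟨m, hym⟩ : ∃ m, y ∈ C m := Set.mem_iUnion.mp (hcov ▸ Set.mem_univ y)
    have hmn : m ≠ n := by rintro rfl; exact hyc hym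
    have hxnm : (x:ℝ) ∉ C m := fun h =>
      absurd (Set.mem_inter h hxC) (by rw [hdisj m n hmn]; exact id)
    -- get a frontier point of C m within distance ε of x
    obtain ⟨s, hsfr, hsd⟩ : ∃ s, s ∈ frontier (C m) ∧ dist s (x:ℝ) < ε := by
      rcases lt_trichotomy (x:ℝ) y with hlt | heq | hgt
      · obtain ⟨s, hs, h1, h2⟩ := seg_frontier C hclosed m x y hlt hxnm hym
        refine ⟨s, hs, ?_⟩
        rw [Real.dist_eq, abs_of_nonneg (by linarith)]
        rw [Real.dist_eq] at hyd
        calc s - ↑x ≤ y - ↑x := by linarith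
        _ ≤ |↑x - y| := by rw [abs_sub_comm]; exact le_abs_self _
        _ < ε := hyd
      · exact absurd (heq ▸ hym) hxnm
      · obtain ⟨s, hs, h1, h2⟩ := seg_frontier (fun k => (Homeomorph.neg ℝ) ⁻¹' C k)
          (fun k => (hclosed k).preimage (Homeomorph.neg ℝ).continuous) m (-x) (-y)
          (by linarith) (by simpa using hxnm) (by simpa using hym)
        rw [← (Homeomorph.neg ℝ).preimage_frontier (C m)] at hs
        refine ⟨-s, by simpa using hs, ?_⟩
        rw [Real.dist_eq, abs_of_nonpos (by linarith)]
        rw [Real.dist_eq] at hyd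
        calc -(-s - ↑x) = ↑x - -s := by ring
        _ ≤ ↑x - y := by linarith
        _ ≤ |↑x - y| := le_abs_self _
        _ < ε := hyd
    have hsCm : s ∈ C m := (hclosed m).frontier_subset hsfr
    have hsB : s ∈ B := by
      intro hmem
      obtain ⟨k, hk⟩ := Set.mem_iUnion.mp hmem
      rcases eq_or_ne k m with rfl | hkm
      · exact hsfr.2 hk
      · exact absurd (Set.mem_inter (interior_subset hk) hsCm)
          (by rw [hdisj k m hkm]; exact id)
    have : (⟨s, hsB⟩ : B) ∈ Metric.ball x ε := by
      simp only [Metric.mem_ball, Subtype.dist_eq]; exact hsd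
    have hsfn : s ∈ frontier (C n) := hball this
    exact absurd (Set.mem_inter hsCm ((hclosed n).frontier_subset hsfn))
      (by rw [hdisj m n hmn]; exact id)

/-- Consequence of Sierpinski's theorem: any path whose image lies in a countable union of
pairwise disjoint closed sets lies entirely in one of them. -/
theorem path_in_countable_disjoint_closed_union (X : Type*) [TopologicalSpace X]
    (C : ℕ → Set X) (hclosed : ∀ n, IsClosed (C n))
    (hdisj : ∀ m n, m ≠ n → C m ∩ C n = ∅)
    (γ : unitInterval → X) (hγ : Continuous γ)
    (hrange : Set.range γ ⊆ ⋃ n, C n) :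
    ∃ n, Set.range γ ⊆ C n := by
  classical
  set E : ℕ → Set ℝ := fun n => Subtype.val '' (γ ⁻¹' C n) with hE
  have hEclosed : ∀ n, IsClosed (E n) := fun n =>
    ((((hclosed n).preimage hγ).isCompact).image continuous_subtype_val).isClosed
  have hEicc : ∀ k u, u ∈ E k → u ∈ Set.Icc (0:ℝ) 1 := by
    rintro k u ⟨t, _, rfl⟩; exact t.2
  have hEcov : ∀ u ∈ Set.Icc (0:ℝ) 1, ∃ n, u ∈ E n := by
    intro u hu
    obtain ⟨n, hn⟩ := Set.mem_iUnion.mp (hrange (Set.mem_range_self ⟨u, hu⟩))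
    exact ⟨n, ⟨⟨u, hu⟩, hn, rfl⟩⟩
  have hEdisj : ∀ m n, m ≠ n → ∀ u, u ∈ E m → u ∈ E n → False := by
    rintro m n hmn u ⟨t₁, ht₁, rfl⟩ ⟨t₂, ht₂, ht⟩
    have : t₂ = t₁ := Subtype.ext ht
    rw [this] at ht₂
    have : γ t₁ ∈ C m ∩ C n := ⟨ht₁, ht₂⟩
    rw [hdisj m n hmn] at this
    exact this
  obtain ⟨p, hp⟩ := hEcov 0 ⟨le_refl 0, zero_le_one⟩
  obtain ⟨q, hq⟩ := hEcov 1 ⟨zero_le_one, le_refl 1⟩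
  set F : ℕ → Set ℝ := fun n =>
    (E n ∪ (if n = p then Set.Iic 0 else ∅)) ∪ (if n = q then Set.Ici 1 else ∅) with hF
  have hmemF : ∀ k u, u ∈ F k ↔ u ∈ E k ∨ (k = p ∧ u ≤ 0) ∨ (k = q ∧ 1 ≤ u) := by
    intro k u
    by_cases hkp : k = p <;> by_cases hkq : k = q <;>
      simp [hF, hkp, hkq] <;> tauto
  have hFclosed : ∀ n, IsClosed (F n) := by
    intro n
    refine ((hEclosed n).union ?_).union ?_ <;> split_ifs <;>
      first | exact isClosed_Iic | exact isClosed_Ici | exact isClosed_empty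
  have hFdisj : ∀ m n, m ≠ n → F m ∩ F n = ∅ := by
    intro m n hmn
    rw [Set.eq_empty_iff_forall_notMem]
    rintro u ⟨hm, hn⟩
    rw [hmemF] at hm hn
    rcases hm with hm | ⟨rfl, hm⟩ | ⟨rfl, hm⟩ <;>
      rcases hn with hn | ⟨rfl, hn⟩ | ⟨rfl, hn⟩
    · exact hEdisj m n hmn u hm hn
    · have h0 : u = 0 := le_antisymm hn (hEicc m u hm).1
      subst h0
      exact hEdisj m n hmn 0 hm hp
    · have h1 : u = 1 := le_antisymm (hEicc m u hm).2 hn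
      subst h1
      exact hEdisj m n hmn 1 hm hq
    · have h0 : u = 0 := le_antisymm hm (hEicc n u hn).1
      subst h0
      exact hEdisj n m hmn.symm 0 hn hp
    · exact hmn rfl
    · linarith
    · have h1 : u = 1 := le_antisymm (hEicc n u hn).2 hm
      subst h1
      exact hEdisj n m hmn.symm 1 hn hq
    · linarith
    · exact hmn rfl
  have hFcov : ⋃ n, F n = Set.univ := by
    rw [Set.eq_univ_iff_forall]
    intro u
    rcases le_or_gt u 0 with h | h
    · exact Set.mem_iUnion.mpr ⟨p, (hmemF p u).mpr (Or.inr (Or.inl ⟨rfl, h⟩))⟩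
    rcases le_or_gt 1 u with h1 | h1
    · exact Set.mem_iUnion.mpr ⟨q, (hmemF q u).mpr (Or.inr (Or.inr ⟨rfl, h1⟩))⟩
    obtain ⟨n, hn⟩ := hEcov u ⟨h.le, h1.le⟩
    exact Set.mem_iUnion.mpr ⟨n, (hmemF n u).mpr (Or.inl hn)⟩
  obtain ⟨n, hn⟩ := real_sierpinski F hFclosed hFdisj hFcov
  refine ⟨n, ?_⟩
  rintro x ⟨t, rfl⟩
  obtain ⟨m, hm⟩ := Set.mem_iUnion.mp (hrange (Set.mem_range_self t))
  have htm : (t : ℝ) ∈ F m := (hmemF m t).mpr (Or.inl ⟨t, hm, rfl⟩)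
  have htn : (t : ℝ) ∈ F n := hn ▸ Set.mem_univ _
  rcases eq_or_ne m n with rfl | hmn
  · exact hm
  · exact absurd (Set.mem_inter htm htn) (by rw [hFdisj m n hmn]; exact id)
end

section
/- Let X be a topological space and let C : ℕ → Set X be a countable family of pairwise disjoint, closed, nonempty, path-connected subsets of X. Then the path-connected components of the union ⋃ i, C i are precisely the individual sets C n: for every n, every x ∈ C n and every y ∈ ⋃ i, C i, the points x and y are joined by a path lying inside ⋃ i, C i if and only if y ∈ C n. -/
open Set

lemma sier_key {A : ℕ → Set ℝ} (hA : ∀ n, IsClosed (A n))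
    (hd : ∀ a b, a ≠ b → A a ∩ A b = ∅) {k j : ℕ} {x y : ℝ}
    (hjk : j ≠ k) (hx : x ∈ A k) (hy : y ∈ A j) (hxy : x < y) :
    ∃ m, m ≠ k ∧ ∃ w ∈ A m ∩ Icc x y, w ∉ interior (A m) := by
  have hdmem : ∀ a b, a ≠ b → ∀ r, r ∈ A a → r ∈ A b → False := by
    intro a b hab r h1 h2
    have := hd a b hab
    have : r ∈ A a ∩ A b := ⟨h1, h2⟩
    rw [hd a b hab] at this
    exact this
  set S := A k ∩ Icc x y with hS
  have hSne : S.Nonempty := ⟨x, hx, le_refl x, hxy.le⟩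
  have hSc : IsClosed S := (hA k).inter isClosed_Icc
  have hSbdd : BddAbove S := ⟨y, fun t ht => ht.2.2⟩
  set z := sSup S with hz
  have hzS : z ∈ S := hSc.csSup_mem hSne hSbdd
  have hzy : z < y :=
    lt_of_le_of_ne hzS.2.2 (fun h => hdmem k j (Ne.symm hjk) z hzS.1 (h ▸ hy))
  set T := A j ∩ Icc z y with hT
  have hTne : T.Nonempty := ⟨y, hy, hzy.le, le_refl y⟩
  have hTc : IsClosed T := (hA j).inter isClosed_Icc
  have hTbdd : BddBelow T := ⟨z, fun t ht => ht.2.1⟩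
  set w := sInf T with hw
  have hwT : w ∈ T := hTc.csInf_mem hTne hTbdd
  have hzw : z < w :=
    lt_of_le_of_ne hwT.2.1 (fun h => hdmem k j (Ne.symm hjk) z hzS.1 (h ▸ hwT.1))
  refine ⟨j, hjk, w, ⟨hwT.1, le_trans hzS.2.1 hwT.2.1, hwT.2.2⟩, ?_⟩
  intro hint
  obtain ⟨δ, hδ, hball⟩ := Metric.isOpen_iff.mp isOpen_interior w hint
  set t := max z (w - δ / 2) with ht
  have ht1 : t < w := max_lt hzw (by linarith)
  have ht2 : t ∈ A j := by
    apply interior_subset (hball ?_)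
    rw [Metric.mem_ball, Real.dist_eq, abs_lt]
    constructor
    · have : w - δ / 2 ≤ t := le_max_right _ _
      linarith
    · linarith
  have : w ≤ t := csInf_le hTbdd ⟨ht2, le_max_left _ _, le_trans ht1.le hwT.2.2⟩
  linarith

lemma sier_key' {A : ℕ → Set ℝ} (hA : ∀ n, IsClosed (A n))
    (hd : ∀ a b, a ≠ b → A a ∩ A b = ∅) {k j : ℕ} {x y : ℝ}
    (hjk : j ≠ k) (hx : x ∈ A k) (hy : y ∈ A j) (hxy : y < x) :
    ∃ m, m ≠ k ∧ ∃ w ∈ A m ∩ Icc y x, w ∉ interior (A m) := by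
  have hx' : -x ∈ -(A k) := by rwa [Set.mem_neg, neg_neg]
  have hy' : -y ∈ -(A j) := by rwa [Set.mem_neg, neg_neg]
  obtain ⟨m, hm, w, ⟨hw1, hw2, hw3⟩, hw4⟩ :=
    sier_key (A := fun i => -(A i)) (fun n => (hA n).neg)
      (fun a b hab => by
        ext r; simp only [Set.mem_inter_iff, Set.mem_neg, Set.mem_empty_iff_false, iff_false]
        rintro ⟨h1, h2⟩
        have : -r ∈ A a ∩ A b := ⟨h1, h2⟩
        rw [hd a b hab] at this; exact this)
      hjk hx' hy' (by linarith)
  refine ⟨m, hm, -w, ⟨by rwa [Set.mem_neg] at hw1, by constructor <;> linarith⟩, ?_⟩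
  intro h
  apply hw4
  have hsub2 : -interior (A m) ⊆ interior (-A m) :=
    interior_maximal (fun u hu => Set.mem_neg.mpr (interior_subset (Set.mem_neg.mp hu)))
      isOpen_interior.neg
  exact hsub2 (Set.mem_neg.mpr h)

lemma sierpinski_real {A : ℕ → Set ℝ} (hA : ∀ n, IsClosed (A n))
    (hd : ∀ a b, a ≠ b → A a ∩ A b = ∅) (hcov : ⋃ i, A i = univ)
    {k j : ℕ} {x y : ℝ} (hx : x ∈ A k) (hy : y ∈ A j) : k = j := by
  have hdmem : ∀ a b, a ≠ b → ∀ r, r ∈ A a → r ∈ A b → False := by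
    intro a b hab r h1 h2
    have : r ∈ A a ∩ A b := ⟨h1, h2⟩
    rw [hd a b hab] at this
    exact this
  by_contra hkj
  set B := (⋃ i, interior (A i))ᶜ with hB
  have hBc : IsClosed B := (isOpen_iUnion fun i => isOpen_interior).isClosed_compl
  have memB : ∀ m w, w ∈ A m → w ∉ interior (A m) → w ∈ B := by
    intro m w hwA hwint
    simp only [hB, mem_compl_iff, mem_iUnion, not_exists]
    intro i hi
    rcases eq_or_ne i m with rfl | hne
    · exact hwint hi
    · exact hdmem i m hne w (interior_subset hi) hwA
  have hxy : x ≠ y := fun h => hdmem k j hkj x hx (h ▸ hy)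
  obtain ⟨m0, hm0, w0, hw0, hw0i⟩ :
      ∃ m, m ≠ k ∧ ∃ w, (w ∈ A m ∧ w ∉ interior (A m)) := by
    rcases lt_or_gt_of_ne hxy with h | h
    · obtain ⟨m, hm, w, hw, hwi⟩ := sier_key hA hd (Ne.symm hkj) hx hy h
      exact ⟨m, hm, w, hw.1, hwi⟩
    · obtain ⟨m, hm, w, hw, hwi⟩ := sier_key' hA hd (Ne.symm hkj) hx hy h
      exact ⟨m, hm, w, hw.1, hwi⟩
  haveI : Nonempty B := ⟨⟨w0, memB _ _ hw0 hw0i⟩⟩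
  haveI : CompleteSpace B := hBc.completeSpace_coe
  have hcover : ⋃ i, (Subtype.val ⁻¹' A i : Set B) = univ := by
    rw [← preimage_iUnion, hcov, preimage_univ]
  obtain ⟨i0, x0, hx0⟩ := nonempty_interior_of_iUnion_of_closed
    (fun i => (hA i).preimage continuous_subtype_val) hcover
  rw [mem_interior_iff_mem_nhds, mem_nhds_subtype] at hx0
  obtain ⟨U, hU, hUsub⟩ := hx0
  obtain ⟨ε, hε, hball⟩ := Metric.mem_nhds_iff.mp hU
  have hsub : ∀ r ∈ B, r ∈ Metric.ball (x0 : ℝ) ε → r ∈ A i0 := by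
    intro r hr hrball
    exact hUsub (show (⟨r, hr⟩ : B) ∈ Subtype.val ⁻¹' U from hball hrball)
  have hx0B : (x0 : ℝ) ∈ B := x0.2
  have hx0A : (x0 : ℝ) ∈ A i0 := hsub _ hx0B (Metric.mem_ball_self hε)
  have hx0ni : (x0 : ℝ) ∉ interior (A i0) := by
    simp only [hB, mem_compl_iff, mem_iUnion, not_exists] at hx0B
    exact hx0B i0
  have hnsub : ¬ Metric.ball (x0 : ℝ) ε ⊆ A i0 := by
    intro h
    exact hx0ni (mem_interior.mpr ⟨_, h, Metric.isOpen_ball, Metric.mem_ball_self hε⟩)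
  obtain ⟨y0, hy0b, hy0n⟩ := not_subset.mp hnsub
  have hy0mem : y0 ∈ ⋃ i, A i := hcov ▸ mem_univ y0
  obtain ⟨j0, hj0⟩ := mem_iUnion.mp hy0mem
  have hj0i0 : j0 ≠ i0 := fun h => hy0n (h ▸ hj0)
  have hx0y0 : (x0 : ℝ) ≠ y0 := fun h => hy0n (h ▸ hx0A)
  have hdist : dist y0 (x0 : ℝ) < ε := Metric.mem_ball.mp hy0b
  obtain ⟨m, hm, w, ⟨hwA, hwI⟩, hwi⟩ :
      ∃ m, m ≠ i0 ∧ ∃ w, (w ∈ A m ∧ (dist w (x0 : ℝ) ≤ dist y0 (x0 : ℝ))) ∧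
        w ∉ interior (A m) := by
    rcases lt_or_gt_of_ne hx0y0 with h | h
    · obtain ⟨m, hm, w, ⟨hw1, hw2, hw3⟩, hwi⟩ := sier_key hA hd hj0i0 hx0A hj0 h
      refine ⟨m, hm, w, ⟨hw1, ?_⟩, hwi⟩
      rw [Real.dist_eq, Real.dist_eq, abs_of_nonneg (by linarith), abs_of_nonneg (by linarith)]
      linarith
    · obtain ⟨m, hm, w, ⟨hw1, hw2, hw3⟩, hwi⟩ := sier_key' hA hd hj0i0 hx0A hj0 h
      refine ⟨m, hm, w, ⟨hw1, ?_⟩, hwi⟩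
      rw [Real.dist_eq, Real.dist_eq, abs_of_nonpos (by linarith), abs_of_nonpos (by linarith)]
      linarith
  have hwB : w ∈ B := memB _ _ hwA hwi
  have : w ∈ A i0 := hsub _ hwB (Metric.mem_ball.mpr (lt_of_le_of_lt hwI hdist))
  exact hdmem m i0 hm w hwA this

/-- Sierpinski's result as used in the paper: if `C n` are pairwise disjoint, closed,
nonempty, path-connected subsets of `X`, then the path-connected components of `⋃ i, C i`
are precisely the individual sets `C n`: for `x ∈ C n` and `y ∈ ⋃ i, C i`, the points
`x` and `y` are joined by a path inside `⋃ i, C i` iff `y ∈ C n`. -/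
theorem pathComponents_of_countable_disjoint_closed_union (X : Type*) [TopologicalSpace X]
    (C : ℕ → Set X) (hclosed : ∀ n, IsClosed (C n))
    (hdisj : ∀ m n, m ≠ n → C m ∩ C n = ∅)
    (hne : ∀ n, (C n).Nonempty)
    (hpath : ∀ n, ∀ x ∈ C n, ∀ y ∈ C n, JoinedIn (C n) x y) :
    ∀ n, ∀ x ∈ C n, ∀ y ∈ ⋃ i, C i,
      (JoinedIn (⋃ i, C i) x y ↔ y ∈ C n) := by
  have hdmem : ∀ a b : ℕ, a ≠ b → ∀ p : X, p ∈ C a → p ∈ C b → False := by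
    intro a b hab p h1 h2
    have : p ∈ C a ∩ C b := ⟨h1, h2⟩
    rw [hdisj a b hab] at this
    exact this
  intro n x hx y hy
  constructor
  · intro h
    obtain ⟨γ, hγ⟩ := h
    obtain ⟨m, hym⟩ := mem_iUnion.mp hy
    rcases eq_or_ne n m with rfl | hnm
    · exact hym
    -- build the real-line family
    set F : ℕ → Set ℝ := fun i => Subtype.val '' (γ ⁻¹' C i) with hF
    have hFclosed : ∀ i, IsClosed (F i) := by
      intro i
      have : IsCompact (γ ⁻¹' C i : Set unitInterval) :=
        ((hclosed i).preimage γ.continuous).isCompact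
      exact (this.image continuous_subtype_val).isClosed
    have hFmem : ∀ i r, r ∈ F i → ∃ h : r ∈ unitInterval, γ ⟨r, h⟩ ∈ C i := by
      intro i r hr
      obtain ⟨t, ht, rfl⟩ := hr
      exact ⟨t.2, by simpa using ht⟩
    set D : ℕ → Set ℝ := fun i =>
      F i ∪ (if i = n then Iic 0 else ∅) ∪ (if i = m then Ici 1 else ∅) with hD
    have hDclosed : ∀ i, IsClosed (D i) := by
      intro i
      apply IsClosed.union
      apply IsClosed.union (hFclosed i)
      · split_ifs <;> simp [isClosed_Iic]
      · split_ifs <;> simp [isClosed_Ici]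
    have hcov : ⋃ i, D i = univ := by
      ext r
      simp only [mem_iUnion, mem_univ, iff_true]
      rcases lt_or_ge r 0 with hr | hr
      · exact ⟨n, Or.inl (Or.inr (by simp [hr.le]))⟩
      rcases le_or_gt r 1 with hr1 | hr1
      · have : γ ⟨r, hr, hr1⟩ ∈ ⋃ i, C i := hγ _
        obtain ⟨i, hi⟩ := mem_iUnion.mp this
        exact ⟨i, Or.inl (Or.inl ⟨⟨r, hr, hr1⟩, hi, rfl⟩)⟩
      · exact ⟨m, Or.inr (by simp [hr1.le])⟩
    have hF0 : ∀ a r, r ∈ F a → r ≤ 0 → a = n := by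
      intro a r hr hr0
      obtain ⟨hru, hrc⟩ := hFmem a r hr
      have : r = 0 := le_antisymm hr0 hru.1
      subst this
      have h0 : (⟨(0:ℝ), hru⟩ : unitInterval) = 0 := by ext; rfl
      rw [h0, γ.source] at hrc
      by_contra hne'
      exact hdmem a n hne' x hrc hx
    have hF1 : ∀ a r, r ∈ F a → 1 ≤ r → a = m := by
      intro a r hr hr1
      obtain ⟨hru, hrc⟩ := hFmem a r hr
      have : r = 1 := le_antisymm hru.2 hr1
      subst this
      have h1 : (⟨(1:ℝ), hru⟩ : unitInterval) = 1 := by ext; rfl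
      rw [h1, γ.target] at hrc
      by_contra hne'
      exact hdmem a m hne' y hrc hym
    have hFF : ∀ a b, a ≠ b → ∀ r, r ∈ F a → r ∈ F b → False := by
      intro a b hab r hra hrb
      obtain ⟨h1, hc1⟩ := hFmem a r hra
      obtain ⟨h2, hc2⟩ := hFmem b r hrb
      have : (⟨r, h1⟩ : unitInterval) = ⟨r, h2⟩ := by ext; rfl
      rw [this] at hc1
      exact hdmem a b hab _ hc1 hc2
    have hDdisj : ∀ a b, a ≠ b → D a ∩ D b = ∅ := by
      intro a b hab
      ext r
      simp only [mem_inter_iff, mem_empty_iff_false, iff_false, not_and]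
      intro hra hrb
      have key : ∀ c r', r' ∈ D c → r' ∈ F c ∨ (c = n ∧ r' ≤ 0) ∨ (c = m ∧ 1 ≤ r') := by
        intro c r' hr'
        rcases hr' with (h | h) | h
        · exact Or.inl h
        · split_ifs at h with hc
          · exact Or.inr (Or.inl ⟨hc, h⟩)
          · exact absurd h (notMem_empty _)
        · split_ifs at h with hc
          · exact Or.inr (Or.inr ⟨hc, h⟩)
          · exact absurd h (notMem_empty _)
      rcases key a r hra with ha | ⟨rfl, ha⟩ | ⟨rfl, ha⟩ <;>
        rcases key b r hrb with hb | ⟨rfl, hb⟩ | ⟨rfl, hb⟩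
      · exact hFF a b hab r ha hb
      · exact hab (hF0 a r ha hb)
      · exact hab (hF1 a r ha hb)
      · exact hab (hF0 b r hb ha).symm
      · exact hab rfl
      · linarith
      · exact hab (hF1 b r hb ha).symm
      · linarith
      · exact hab rfl
    have h0 : (0 : ℝ) ∈ D n := Or.inl (Or.inr (by simp))
    have h1 : (1 : ℝ) ∈ D m := Or.inr (by simp)
    exact absurd (sierpinski_real hDclosed hDdisj hcov h0 h1) hnm
  · intro hyn
    exact (hpath n x hx y hyn).mono (subset_iUnion C n)
end
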